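/- arXiv:2303.00203 — 5 statements merged into one kernel-verified Lean document; each statement's English description precedes it below -/
import Mathlib

section
/- Let α ∈ (0,1). Suppose L is a conditional pivot given V with conditional laws given by a Markov kernel Q from 𝒱 to 𝓛, and let m : 𝓛 → ℝ be measurable, with the map v ↦ q_α((Q(v)).map m) measurable. Then the map J defined by J(o*) = {(θ', z) ∈ Θ × 𝒵 : o(z) = o*, m(L(θ', z)) ≥ q_α((Q(V(θ', z))).map m)} is a 1−α joint coverage region: equivalently, for every P ∈ 𝒫, P{z ∈ 𝒵 : m(L(θ(P), z)) ≥ q_α((Q(V(θ(P), z))).map m)} ≥ 1 − α. -/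
/-!
Under the pivot property, `P (q_α((Q (V z)).map m) ≤ m (L z))` is the `μ_P ⊗ₘ Q`-measure of
`{(v, l) | q_α((Q v).map m) ≤ m l}`, that is, the `μ_P`-average of the fibre probabilities
`Q v {l | q_α((Q v).map m) ≤ m l}`. Each of these is at least `1 - α`, because a probability
measure on `ℝ` puts mass at most `α` strictly below its lower `α`-quantile.
-/

open MeasureTheory ProbabilityTheory

noncomputable def lowerQuantile (μ : Measure ℝ) (β : ℝ) : ℝ :=
  sInf {x : ℝ | ENNReal.ofReal β ≤ μ (Set.Iic x)}

open Set Filter Topology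

lemma measure_Iio_le_of_forall_measure_Iic_le {α : Type*} [ConditionallyCompleteLinearOrder α]
    [TopologicalSpace α] [OrderTopology α] [FirstCountableTopology α] [DenselyOrdered α]
    [NoMinOrder α] [MeasurableSpace α] (μ : Measure α) {a : α} {c : ENNReal}
    (h : ∀ x < a, μ (Iic x) ≤ c) : μ (Iio a) ≤ c := by
  obtain ⟨u, hu_mono, hu_lt, hu_lim⟩ := exists_seq_strictMono_tendsto a
  rw [← iUnion_Iic_eq_Iio_of_lt_of_tendsto hu_lt hu_lim,
    Monotone.measure_iUnion fun _ _ hij => Iic_subset_Iic.2 (hu_mono.monotone hij)]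
  exact iSup_le fun n => h _ (hu_lt n)

lemma bddBelow_setOf_le_measure_Iic (ν : Measure ℝ) [IsProbabilityMeasure ν] {β : ℝ}
    (hβ : 0 < β) : BddBelow {x : ℝ | ENNReal.ofReal β ≤ ν (Iic x)} := by
  have hlim : Tendsto (fun x => ν (Iic x)) atBot (𝓝 0) := by
    simpa [ofReal_cdf] using ENNReal.tendsto_ofReal (tendsto_cdf_atBot ν)
  obtain ⟨x₀, hx₀⟩ :=
    eventually_atBot.1 (hlim.eventually (gt_mem_nhds (ENNReal.ofReal_pos.2 hβ)))
  exact ⟨x₀, fun x hx => le_of_not_gt fun hlt => (hx₀ x hlt.le).not_ge hx⟩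

lemma measure_Iio_lowerQuantile_le (ν : Measure ℝ) [IsProbabilityMeasure ν] {β : ℝ}
    (hβ : 0 < β) : ν (Iio (lowerQuantile ν β)) ≤ ENNReal.ofReal β := by
  refine measure_Iio_le_of_forall_measure_Iic_le ν fun x hx => le_of_not_gt fun hxβ => ?_
  exact hx.not_ge <| csInf_le (bddBelow_setOf_le_measure_Iic ν hβ) hxβ.le

lemma ofReal_one_sub_le_measure_lowerQuantile_map_le {𝓛 : Type*} [MeasurableSpace 𝓛]
    (μ : Measure 𝓛) [IsProbabilityMeasure μ] {m : 𝓛 → ℝ} (hm : Measurable m) {β : ℝ}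
    (hβ : 0 < β) : ENNReal.ofReal (1 - β) ≤ μ {l | lowerQuantile (μ.map m) β ≤ m l} := by
  have : IsProbabilityMeasure (μ.map m) := Measure.isProbabilityMeasure_map hm.aemeasurable
  have hbelow : μ (m ⁻¹' Iio (lowerQuantile (μ.map m) β)) ≤ ENNReal.ofReal β := by
    rw [← Measure.map_apply hm measurableSet_Iio]
    exact measure_Iio_lowerQuantile_le _ hβ
  have hcompl : {l | lowerQuantile (μ.map m) β ≤ m l}
      = (m ⁻¹' Iio (lowerQuantile (μ.map m) β))ᶜ := by
    ext l; simp
  rw [hcompl, prob_compl_eq_one_sub (hm measurableSet_Iio), ENNReal.ofReal_sub _ hβ.le,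
    ENNReal.ofReal_one]
  exact tsub_le_tsub_left hbelow 1

lemma le_compProd_apply_of_forall_le {α β : Type*} [MeasurableSpace α] [MeasurableSpace β]
    (μ : Measure α) [IsProbabilityMeasure μ] (κ : Kernel α β) [IsSFiniteKernel κ]
    {s : Set (α × β)} (hs : MeasurableSet s) {c : ENNReal}
    (h : ∀ a, c ≤ κ a (Prod.mk a ⁻¹' s)) : c ≤ (μ ⊗ₘ κ) s := by
  rw [Measure.compProd_apply hs]
  calc c = ∫⁻ _, c ∂μ := by simp
    _ ≤ ∫⁻ a, κ a (Prod.mk a ⁻¹' s) ∂μ := lintegral_mono h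

theorem conditional_pivot_test_statistic_JCR_valid_general
    {𝒵 𝒪 Θ 𝒱 𝓛 : Type*}
    [MeasurableSpace 𝒵] [MeasurableSpace 𝒪] [MeasurableSpace Θ]
    [MeasurableSpace 𝒱] [MeasurableSpace 𝓛]
    (𝔓 : Set (Measure 𝒵)) (hprob : ∀ P ∈ 𝔓, IsProbabilityMeasure P)
    (θ : Measure 𝒵 → Θ)
    (o : 𝒵 → 𝒪)
    (L : Θ × 𝒵 → 𝓛) (hL : Measurable L)
    (V : Θ × 𝒵 → 𝒱) (hV : Measurable V)
    (α : ℝ) (hα : α ∈ Set.Ioo (0 : ℝ) 1)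
    (Q : Kernel 𝒱 𝓛) [IsMarkovKernel Q]
    (hpivot : ∀ P ∈ 𝔓,
      P.map (fun z => (V (θ P, z), L (θ P, z)))
        = (P.map (fun z => V (θ P, z))).compProd Q)
    (m : 𝓛 → ℝ) (hm : Measurable m)
    (hq : Measurable (fun v : 𝒱 => lowerQuantile ((Q v).map m) α))
    (J : 𝒪 → Set (Θ × 𝒵))
    (hJ : ∀ ostar : 𝒪, J ostar =
      {p : Θ × 𝒵 | o p.2 = ostar ∧ lowerQuantile ((Q (V p)).map m) α ≤ m (L p)}) :
    ∀ P ∈ 𝔓,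
      ENNReal.ofReal (1 - α) ≤ P {z : 𝒵 | (θ P, z) ∈ J (o z)} ∧
      ENNReal.ofReal (1 - α) ≤
        P {z : 𝒵 | lowerQuantile ((Q (V (θ P, z))).map m) α ≤ m (L (θ P, z))} := by
  intro P hP
  have hPprob := hprob P hP
  have hVm : Measurable fun z => V (θ P, z) := hV.comp measurable_prodMk_left
  have hLm : Measurable fun z => L (θ P, z) := hL.comp measurable_prodMk_left
  have hμprob := Measure.isProbabilityMeasure_map (μ := P) hVm.aemeasurable
  have hT : MeasurableSet {p : 𝒱 × 𝓛 | lowerQuantile ((Q p.1).map m) α ≤ m p.2} :=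
    measurableSet_le (hq.comp measurable_fst) (hm.comp measurable_snd)
  have hcover : ENNReal.ofReal (1 - α) ≤
      P {z : 𝒵 | lowerQuantile ((Q (V (θ P, z))).map m) α ≤ m (L (θ P, z))} :=
    calc ENNReal.ofReal (1 - α)
        ≤ ((P.map fun z => V (θ P, z)) ⊗ₘ Q)
            {p | lowerQuantile ((Q p.1).map m) α ≤ m p.2} :=
          le_compProd_apply_of_forall_le _ Q hT fun v =>
            ofReal_one_sub_le_measure_lowerQuantile_map_le (Q v) hm hα.1
      _ = _ := by rw [← hpivot P hP, Measure.map_apply (hVm.prodMk hLm) hT]; rfl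
  exact ⟨by simpa [hJ] using hcover, hcover⟩

/-- Validity of the test-statistic based conditional-pivot JCR (Theorem 2). -/
theorem conditional_pivot_test_statistic_JCR_valid
    {𝒵 𝒪 Θ 𝒱 𝓛 : Type*}
    [MeasurableSpace 𝒵] [MeasurableSpace 𝒪] [MeasurableSpace Θ]
    [MeasurableSpace 𝒱] [MeasurableSpace 𝓛]
    (𝔓 : Set (Measure 𝒵)) (hprob : ∀ P ∈ 𝔓, IsProbabilityMeasure P)
    (θ : Measure 𝒵 → Θ)
    (o : 𝒵 → 𝒪) (ho : Measurable o)
    (L : Θ × 𝒵 → 𝓛) (hL : Measurable L)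
    (V : Θ × 𝒵 → 𝒱) (hV : Measurable V)
    (α : ℝ) (hα : α ∈ Set.Ioo (0 : ℝ) 1)
    (Q : Kernel 𝒱 𝓛) [IsMarkovKernel Q]
    (hpivot : ∀ P ∈ 𝔓,
      P.map (fun z => (V (θ P, z), L (θ P, z)))
        = (P.map (fun z => V (θ P, z))).compProd Q)
    (m : 𝓛 → ℝ) (hm : Measurable m)
    (hq : Measurable (fun v : 𝒱 => lowerQuantile ((Q v).map m) α))
    (J : 𝒪 → Set (Θ × 𝒵))
    (hJ : ∀ ostar : 𝒪, J ostar =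
      {p : Θ × 𝒵 | o p.2 = ostar ∧ lowerQuantile ((Q (V p)).map m) α ≤ m (L p)})
    (hmeas : ∀ P ∈ 𝔓, MeasurableSet {z : 𝒵 | (θ P, z) ∈ J (o z)}) :
    ∀ P ∈ 𝔓,
      ENNReal.ofReal (1 - α) ≤ P {z : 𝒵 | (θ P, z) ∈ J (o z)} ∧
      ENNReal.ofReal (1 - α) ≤
        P {z : 𝒵 | lowerQuantile ((Q (V (θ P, z))).map m) α ≤ m (L (θ P, z))} :=
  conditional_pivot_test_statistic_JCR_valid_general 𝔓 hprob θ o L hL V hV α hα Q hpivot m hm hq J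
    hJ
end

section
/- (Validity of the randomized conditional-pivot JCR.) Let α ∈ (0,1) and K ≥ 1. Let 𝒱 be a measurable space and let κ be a Markov kernel from 𝒱 to ℝ. On a probability space, let V be a random element of 𝒱 with law ν, and let W₀, W₁, …, W_K be real random variables such that the joint law of (V, W₀, W₁, …, W_K) equals ν ⊗ₖ κ^{⊗(K+1)}, i.e., conditional on V = v the variables W₀, …, W_K are i.i.d. with common law κ(v). Then ℙ( #{i ∈ {1,…,K} : W_i ≤ W₀} ≥ ⌊(K+1)α⌋ ) ≥ 1 − α. In particular, taking V = V(θ_P, Z), W₀ = m(L(θ_P, Z)), and W₁,…,W_K the randomization draws M₁,…,M_K sampled i.i.d. from the pushforward of the conditional pivot law under m, the randomized region J_N(o*) = {(θ', z) : o(z) = o*, m(L(θ', z)) ≥ q_{α'}({M₁,…,M_K})} with α' = ⌊(K+1)α⌋/K is a 1−α joint coverage region over the joint randomness of Z and M₁,…,M_K. -/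
open MeasureTheory ProbabilityTheory Finset
open scoped ENNReal

noncomputable def cnt {n : ℕ} (j : Fin n) (w : Fin n → ℝ) : ℕ :=
  (Finset.univ.filter (fun i => i ≠ j ∧ w i ≤ w j)).card

lemma cnt_meas {n : ℕ} (j : Fin n) : Measurable (cnt j) := by
  classical
  have : cnt j = fun w : Fin n → ℝ => ∑ i : Fin n, if i ≠ j ∧ w i ≤ w j then 1 else 0 := by
    funext w; rw [cnt, Finset.card_filter]
  rw [this]
  apply Finset.measurable_sum
  intro i _
  by_cases h : i = j
  · simp [h]
  · have : MeasurableSet {w : Fin n → ℝ | i ≠ j ∧ w i ≤ w j} := by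
      simp only [h, ne_eq, not_false_eq_true, true_and]
      exact measurableSet_le (measurable_pi_apply i) (measurable_pi_apply j)
    exact Measurable.ite this measurable_const measurable_const

lemma cnt_card_le {n : ℕ} (m : ℕ) (w : Fin n → ℝ) :
    (Finset.univ.filter (fun j => cnt j w < m)).card ≤ m := by
  classical
  set B := Finset.univ.filter (fun j => cnt j w < m) with hB
  by_contra h
  push_neg at h
  have hne : B.Nonempty := Finset.card_pos.mp (by omega)
  obtain ⟨j, hjB, hjmax⟩ := Finset.exists_max_image B w hne
  have hsub : B.erase j ⊆ Finset.univ.filter (fun i => i ≠ j ∧ w i ≤ w j) := by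
    intro i hi
    simp only [Finset.mem_erase] at hi
    simp only [Finset.mem_filter, Finset.mem_univ, true_and]
    exact ⟨hi.1, hjmax i hi.2⟩
  have h1 : B.card - 1 ≤ cnt j w := by
    have := Finset.card_le_card hsub
    rw [Finset.card_erase_of_mem hjB] at this
    exact this
  have h2 : cnt j w < m := (Finset.mem_filter.mp hjB).2
  omega

lemma cnt_comp {n : ℕ} (σ : Equiv.Perm (Fin n)) (j : Fin n) (w : Fin n → ℝ) :
    cnt j (w ∘ σ) = cnt (σ j) w := by
  classical
  unfold cnt
  apply Finset.card_bij (fun i _ => σ i)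
  · intro i hi
    simp only [Finset.mem_filter, Finset.mem_univ, true_and, Function.comp] at hi ⊢
    exact ⟨fun h => hi.1 (σ.injective h), hi.2⟩
  · intro a ha b hb h
    exact σ.injective h
  · intro i hi
    refine ⟨σ.symm i, ?_, by simp⟩
    simp only [Finset.mem_filter, Finset.mem_univ, true_and, Function.comp,
      Equiv.apply_symm_apply] at hi ⊢
    exact ⟨fun h => hi.1 (by rw [← h, Equiv.apply_symm_apply]), hi.2⟩

lemma pi_perm_invariant {n : ℕ} (μ : Measure ℝ) [IsProbabilityMeasure μ]
    (σ : Equiv.Perm (Fin n)) {S : Set (Fin n → ℝ)} (hS : MeasurableSet S) :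
    Measure.pi (fun _ : Fin n => μ) ((fun w => w ∘ σ) ⁻¹' S)
      = Measure.pi (fun _ : Fin n => μ) S := by
  have hmp := measurePreserving_piCongrLeft (fun _ : Fin n => μ) σ.symm
  have hco : ⇑(MeasurableEquiv.piCongrLeft (fun _ : Fin n => ℝ) σ.symm)
      = fun w => w ∘ σ := by
    funext w
    funext j
    have h1 : σ.symm (σ j) = j := σ.symm_apply_apply j
    calc (MeasurableEquiv.piCongrLeft (fun _ : Fin n => ℝ) σ.symm) w j
        = (MeasurableEquiv.piCongrLeft (fun _ : Fin n => ℝ) σ.symm) w (σ.symm (σ j)) := by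
          rw [h1]
      _ = w (σ j) := by
          rw [MeasurableEquiv.coe_piCongrLeft]
          exact Equiv.piCongrLeft_apply_apply (fun _ : Fin n => ℝ) σ.symm w (σ j)
  rw [← hco]
  exact hmp.measure_preimage hS.nullMeasurableSet

/-- Validity of the randomized conditional-pivot JCR (Theorem 3):
if, conditionally on `V = v`, the variables `W 0, W 1, …, W K` are i.i.d. with
common law `κ v`, then with probability at least `1 − α` at least
`⌊(K+1)α⌋` of the values `W i`, `1 ≤ i ≤ K`, are `≤ W 0`. -/
theorem randomized_conditional_pivot_JCR_valid
    {𝒱 Ω : Type*} [MeasurableSpace 𝒱] [MeasurableSpace Ω]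
    (Pr : Measure Ω) [IsProbabilityMeasure Pr]
    (α : ℝ) (hα : α ∈ Set.Ioo (0 : ℝ) 1)
    (K : ℕ) (hK : 1 ≤ K)
    (κ : Kernel 𝒱 ℝ) [IsMarkovKernel κ]
    (κpi : Kernel 𝒱 (Fin (K + 1) → ℝ))
    (hκpi : ∀ v : 𝒱, κpi v = Measure.pi (fun _ : Fin (K + 1) => κ v))
    (V : Ω → 𝒱) (hV : Measurable V)
    (ν : Measure 𝒱) (hν : Pr.map V = ν)
    (W : Fin (K + 1) → Ω → ℝ) (hW : ∀ i, Measurable (W i))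
    (hjoint : Pr.map (fun ω => (V ω, fun i => W i ω)) = ν.compProd κpi) :
    ENNReal.ofReal (1 - α) ≤
      Pr {ω : Ω | ⌊((K : ℝ) + 1) * α⌋₊ ≤
        ({i : Fin (K + 1) | i ≠ 0 ∧ W i ω ≤ W 0 ω} : Set (Fin (K + 1))).ncard} := by
  classical
  obtain ⟨hα0, hα1⟩ := hα
  set m : ℕ := ⌊((K : ℝ) + 1) * α⌋₊ with hm
  set f : Ω → 𝒱 × (Fin (K + 1) → ℝ) := fun ω => (V ω, fun i => W i ω) with hf_def
  have hf : Measurable f := hV.prodMk (measurable_pi_lambda _ hW)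
  -- probability instances
  haveI hνP : IsProbabilityMeasure ν := by
    rw [← hν]; exact Measure.isProbabilityMeasure_map hV.aemeasurable
  haveI hκpiM : IsMarkovKernel κpi := ⟨fun v => by rw [hκpi v]; infer_instance⟩
  set μ : Measure (𝒱 × (Fin (K + 1) → ℝ)) := ν.compProd κpi with hμ
  haveI : IsProbabilityMeasure μ := by infer_instance
  -- bad sets
  set Bs : Fin (K + 1) → Set (𝒱 × (Fin (K + 1) → ℝ)) :=
    fun j => {p | cnt j p.2 < m} with hBs
  have hBmeas : ∀ j, MeasurableSet (Bs j) := fun j =>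
    measurableSet_lt ((cnt_meas j).comp measurable_snd) measurable_const
  -- all bad sets have equal measure
  have hBeq : ∀ j, μ (Bs j) = μ (Bs 0) := by
    intro j
    have hcomp : ∀ j : Fin (K + 1), μ (Bs j) = ∫⁻ v, κpi v {w | cnt j w < m} ∂ν := by
      intro j
      rw [hμ, Measure.compProd_apply (hBmeas j)]
      rfl
    rw [hcomp j, hcomp 0]
    refine lintegral_congr fun v => ?_
    rw [hκpi v]
    have hS : MeasurableSet {w : Fin (K + 1) → ℝ | cnt 0 w < m} :=
      measurableSet_lt (cnt_meas 0) measurable_const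
    have hpre : {w : Fin (K + 1) → ℝ | cnt j w < m}
        = (fun w => w ∘ (Equiv.swap (0 : Fin (K + 1)) j)) ⁻¹' {w | cnt 0 w < m} := by
      ext w
      simp only [Set.mem_preimage, Set.mem_setOf_eq]
      rw [cnt_comp (Equiv.swap (0 : Fin (K + 1)) j) 0 w, Equiv.swap_apply_left]
    rw [hpre, pi_perm_invariant (κ v) (Equiv.swap 0 j) hS]
  -- sum bound
  have hsum : (K + 1 : ℝ≥0∞) * μ (Bs 0) ≤ (m : ℝ≥0∞) := by
    have h1 : ∑ j : Fin (K + 1), μ (Bs j) = (K + 1 : ℝ≥0∞) * μ (Bs 0) := by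
      rw [Finset.sum_congr rfl (fun j _ => hBeq j)]
      simp [Finset.sum_const, mul_comm]
    rw [← h1]
    have h2 : ∑ j : Fin (K + 1), μ (Bs j)
        = ∫⁻ p, ∑ j : Fin (K + 1), (Bs j).indicator (fun _ => (1 : ℝ≥0∞)) p ∂μ := by
      rw [lintegral_finset_sum _ (fun j _ =>
        measurable_const.indicator (hBmeas j))]
      exact Finset.sum_congr rfl fun j _ => (lintegral_indicator_one (hBmeas j)).symm
    rw [h2]
    have h3 : ∀ p : 𝒱 × (Fin (K + 1) → ℝ),
        ∑ j : Fin (K + 1), (Bs j).indicator (fun _ => (1 : ℝ≥0∞)) p ≤ (m : ℝ≥0∞) := by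
      intro p
      have : ∑ j : Fin (K + 1), (Bs j).indicator (fun _ => (1 : ℝ≥0∞)) p
          = ((Finset.univ.filter (fun j : Fin (K + 1) => cnt j p.2 < m)).card : ℝ≥0∞) := by
        rw [Finset.card_filter]
        push_cast
        refine Finset.sum_congr rfl fun j _ => ?_
        by_cases h : cnt j p.2 < m
        · simp [Set.indicator, hBs, h]
        · simp [Set.indicator, hBs, h]
      rw [this]
      exact_mod_cast Nat.cast_le.mpr (cnt_card_le m p.2)
    calc ∫⁻ p, ∑ j : Fin (K + 1), (Bs j).indicator (fun _ => (1 : ℝ≥0∞)) p ∂μ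
        ≤ ∫⁻ _, (m : ℝ≥0∞) ∂μ := lintegral_mono h3
      _ = (m : ℝ≥0∞) := by simp
  -- μ (Bs 0) ≤ ofReal α
  have hmle : (m : ℝ≥0∞) ≤ (K + 1 : ℝ≥0∞) * ENNReal.ofReal α := by
    have hfl : (m : ℝ) ≤ ((K : ℝ) + 1) * α :=
      Nat.floor_le (by positivity)
    have : (m : ℝ≥0∞) = ENNReal.ofReal (m : ℝ) := by
      rw [ENNReal.ofReal_natCast]
    rw [this]
    calc ENNReal.ofReal (m : ℝ) ≤ ENNReal.ofReal (((K : ℝ) + 1) * α) :=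
          ENNReal.ofReal_le_ofReal hfl
      _ = ENNReal.ofReal ((K : ℝ) + 1) * ENNReal.ofReal α :=
          ENNReal.ofReal_mul (by positivity)
      _ = (K + 1 : ℝ≥0∞) * ENNReal.ofReal α := by
          congr 1
          rw [show ((K : ℝ) + 1) = ((K + 1 : ℕ) : ℝ) by push_cast; ring,
            ENNReal.ofReal_natCast]
          push_cast
          ring
  have hB0 : μ (Bs 0) ≤ ENNReal.ofReal α := by
    have hne : (K + 1 : ℝ≥0∞) ≠ 0 := by
      simp
    have hnt : (K + 1 : ℝ≥0∞) ≠ ⊤ := by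
      exact_mod_cast ENNReal.natCast_ne_top (K + 1)
    have := le_trans hsum hmle
    exact (ENNReal.mul_le_mul_iff_right hne hnt).mp this
  -- identify the event
  have hGmeas : MeasurableSet {p : 𝒱 × (Fin (K + 1) → ℝ) | m ≤ cnt 0 p.2} :=
    measurableSet_le measurable_const ((cnt_meas 0).comp measurable_snd)
  have hEv : {ω : Ω | m ≤ ({i : Fin (K + 1) | i ≠ 0 ∧ W i ω ≤ W 0 ω}
        : Set (Fin (K + 1))).ncard}
      = f ⁻¹' {p : 𝒱 × (Fin (K + 1) → ℝ) | m ≤ cnt 0 p.2} := by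
    ext ω
    simp only [Set.mem_setOf_eq, Set.mem_preimage, hf_def]
    have : ({i : Fin (K + 1) | i ≠ 0 ∧ W i ω ≤ W 0 ω} : Set (Fin (K + 1))).ncard
        = cnt (0 : Fin (K + 1)) (fun i => W i ω) := by
      have hset : {i : Fin (K + 1) | i ≠ 0 ∧ W i ω ≤ W 0 ω}
          = ↑(Finset.univ.filter (fun i : Fin (K + 1) => i ≠ 0 ∧ W i ω ≤ W 0 ω)) := by
        ext i; simp
      rw [hset, Set.ncard_coe_finset]
      rfl
    rw [this]
  rw [hEv]
  have hPr : Pr (f ⁻¹' {p : 𝒱 × (Fin (K + 1) → ℝ) | m ≤ cnt 0 p.2})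
      = μ {p | m ≤ cnt 0 p.2} := by
    rw [← hjoint, Measure.map_apply hf hGmeas]
  rw [hPr]
  have hcompl : {p : 𝒱 × (Fin (K + 1) → ℝ) | m ≤ cnt 0 p.2} = (Bs 0)ᶜ := by
    ext p
    simp [hBs, not_lt]
  rw [hcompl, prob_compl_eq_one_sub (hBmeas 0)]
  calc ENNReal.ofReal (1 - α) = 1 - ENNReal.ofReal α := by
        rw [ENNReal.ofReal_sub 1 (le_of_lt hα0), ENNReal.ofReal_one]
    _ ≤ 1 - μ (Bs 0) := tsub_le_tsub_left hB0 1
end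

section
/- (Validity of adequate-set JCRs.) Let α ∈ (0,1) and let 𝒵 = 𝒵c × 𝒳 × 𝒴. Suppose L : Θ × 𝒵 → 𝓛 is a conditional pivot given V : Θ × 𝒵 → 𝒱, with conditional laws given by a Markov kernel Q from 𝒱 to 𝓛, and let S assign to each v ∈ 𝒱 a measurable subset S(v) ⊆ 𝓛 with {(v,l) : l ∈ S(v)} measurable and, for every P ∈ 𝒫, Q(v)(S(v)) ≥ 1 − α for μ_P-almost every v (μ_P being the law of V(θ(P), Z) under Z ∼ P). Let 𝒜 be a measurable space, let A : Θ × 𝒳 × 𝒴 → 𝒜 be an adequate map and W : Θ × 𝒵c → subsets of 𝒜 an adequate set such that for all θ' ∈ Θ, zc ∈ 𝒵c, x ∈ 𝒳, y ∈ 𝒴: L(θ', zc, x, y) ∈ S(V(θ', zc, x, y)) if and only if A(θ', x, y) ∈ W(θ', zc). Then for every P ∈ 𝒫, writing (Zc, X, Y) ∼ P, one has P( A(θ(P), X, Y) ∈ W(θ(P), Zc) ) ≥ 1 − α; that is, the region J(zc, x) = {(θ', y) ∈ Θ × 𝒴 : A(θ', x, y) ∈ W(θ', zc)} covers (θ(P),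 Y) with probability at least 1 − α. -/
open MeasureTheory ProbabilityTheory

/-- Validity of adequate-set JCRs (Theorem 4). -/
theorem adequate_set_JCR_valid
    {𝒵c 𝒳 𝒴 Θ 𝒱 𝓛 𝒜 : Type*}
    [MeasurableSpace 𝒵c] [MeasurableSpace 𝒳] [MeasurableSpace 𝒴]
    [MeasurableSpace Θ] [MeasurableSpace 𝒱] [MeasurableSpace 𝓛] [MeasurableSpace 𝒜]
    (𝔓 : Set (Measure (𝒵c × 𝒳 × 𝒴))) (hprob : ∀ P ∈ 𝔓, IsProbabilityMeasure P)
    (θ : Measure (𝒵c × 𝒳 × 𝒴) → Θ)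
    (α : ℝ) (hα : α ∈ Set.Ioo (0 : ℝ) 1)
    (L : Θ × (𝒵c × 𝒳 × 𝒴) → 𝓛) (hL : Measurable L)
    (V : Θ × (𝒵c × 𝒳 × 𝒴) → 𝒱) (hV : Measurable V)
    (Q : Kernel 𝒱 𝓛) [IsMarkovKernel Q]
    (hpivot : ∀ P ∈ 𝔓,
      P.map (fun z => (V (θ P, z), L (θ P, z)))
        = (P.map (fun z => V (θ P, z))).compProd Q)
    (S : 𝒱 → Set 𝓛)
    (hSmeas : MeasurableSet {p : 𝒱 × 𝓛 | p.2 ∈ S p.1})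
    (hScov : ∀ P ∈ 𝔓, ∀ᵐ v ∂(P.map (fun z => V (θ P, z))),
      ENNReal.ofReal (1 - α) ≤ Q v (S v))
    (A : Θ × 𝒳 × 𝒴 → 𝒜) (hA : Measurable A)
    (W : Θ × 𝒵c → Set 𝒜)
    (hadequate : ∀ (θ' : Θ) (zc : 𝒵c) (x : 𝒳) (y : 𝒴),
      L (θ', (zc, x, y)) ∈ S (V (θ', (zc, x, y))) ↔ A (θ', x, y) ∈ W (θ', zc))
    (hmeas : ∀ P ∈ 𝔓,
      MeasurableSet {z : 𝒵c × 𝒳 × 𝒴 | A (θ P, z.2.1, z.2.2) ∈ W (θ P, z.1)}) :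
    ∀ P ∈ 𝔓, ENNReal.ofReal (1 - α) ≤
      P {z : 𝒵c × 𝒳 × 𝒴 | A (θ P, z.2.1, z.2.2) ∈ W (θ P, z.1)} := by
  intro P hP
  have hPP := hprob P hP
  have hset : {z : 𝒵c × 𝒳 × 𝒴 | A (θ P, z.2.1, z.2.2) ∈ W (θ P, z.1)}
      = (fun z => (V (θ P, z), L (θ P, z))) ⁻¹' {p : 𝒱 × 𝓛 | p.2 ∈ S p.1} := by
    ext ⟨zc, x, y⟩
    simp [Set.mem_preimage, hadequate (θ P) zc x y]
  have hm : Measurable (fun z => (V (θ P, z), L (θ P, z))) := by fun_prop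
  rw [hset, ← Measure.map_apply hm hSmeas, hpivot P hP,
    Measure.compProd_apply hSmeas]
  have hμ : IsProbabilityMeasure (P.map (fun z => V (θ P, z))) :=
    Measure.isProbabilityMeasure_map (hV.comp measurable_prodMk_left).aemeasurable
  calc ENNReal.ofReal (1 - α)
      = ∫⁻ _, ENNReal.ofReal (1 - α) ∂(P.map (fun z => V (θ P, z))) := by
        simp
    _ ≤ ∫⁻ v, Q v (Prod.mk v ⁻¹' {p : 𝒱 × 𝓛 | p.2 ∈ S p.1})
          ∂(P.map (fun z => V (θ P, z))) := by
        refine lintegral_mono_ae ((hScov P hP).mono fun v hv => ?_)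
        simpa using hv
end

section
/- (JCR under finite-group invariance.) Let α ∈ (0,1), let G be a finite group of cardinality K acting measurably on a measurable space 𝕀, and let m : 𝕀 → ℝ be measurable. Let I : Θ × 𝒵 → 𝕀 be measurable and suppose that for every P ∈ 𝒫 and every g ∈ G, the law of g • I(θ(P), Z) under Z ∼ P equals the law of I(θ(P), Z). Then for every P ∈ 𝒫, P{ z ∈ 𝒵 : #{g ∈ G : m(g • I(θ(P), z)) ≤ m(I(θ(P), z))} ≥ ⌊Kα⌋ } ≥ 1 − α. Equivalently, the region J(o*) = {(θ', z) : o(z) = o*, m(I(θ', z)) ≥ q_{α'}(m(g • I(θ', z)), g ∈ G)} with α' = ⌊Kα⌋/K is a 1−α joint coverage region. -/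
open MeasureTheory ProbabilityTheory
open scoped ENNReal

lemma aux_count {G 𝕀 : Type*} [Group G] [Fintype G] [MulAction G 𝕀] [DecidableEq G]
    (m : 𝕀 → ℝ) (k : ℕ) (x : 𝕀) [DecidablePred fun h : G =>
      ({g : G | m (g • (h • x)) ≤ m (h • x)} : Set G).ncard < k] :
    (Finset.univ.filter (fun h : G =>
      ({g : G | m (g • (h • x)) ≤ m (h • x)} : Set G).ncard < k)).card ≤ k := by
  classical
  set S := Finset.univ.filter (fun h : G =>
      ({g : G | m (g • (h • x)) ≤ m (h • x)} : Set G).ncard < k) with hS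
  rcases S.eq_empty_or_nonempty with he | hne
  · simp [he]
  · obtain ⟨h0, hh0, hmax⟩ := S.exists_max_image (fun h => m (h • x)) hne
    have hcard : (S : Set G).ncard ≤
        ({g : G | m (g • (h0 • x)) ≤ m (h0 • x)} : Set G).ncard := by
      apply Set.ncard_le_ncard_of_injOn (fun h => h * h0⁻¹)
      · intro h hh
        have : (h * h0⁻¹) • (h0 • x) = h • x := by
          rw [smul_smul, inv_mul_cancel_right]
        simpa [this] using hmax h hh
      · intro a _ b _ hab
        exact mul_right_cancel hab
    have hlt : ({g : G | m (g • (h0 • x)) ≤ m (h0 • x)} : Set G).ncard < k := by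
      have := Finset.mem_filter.mp hh0
      exact this.2
    have := Set.ncard_coe_finset S
    omega

/-- Validity of the JCR under finite-group invariance (Theorem 5):
if `I(θ(P), Z)` is invariant in distribution under the action of a finite group `G`
of cardinality `K`, then with probability at least `1 − α`, at least `⌊Kα⌋` of the
orbit values `m(g • I)` are `≤ m(I)`. -/
theorem finite_group_invariance_JCR_valid
    {𝒵 𝒪 Θ 𝕀 G : Type*}
    [MeasurableSpace 𝒵] [MeasurableSpace 𝒪] [MeasurableSpace Θ] [MeasurableSpace 𝕀]
    [Group G] [Fintype G] [MulAction G 𝕀]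
    (hact : ∀ g : G, Measurable (fun x : 𝕀 => g • x))
    (𝔓 : Set (Measure 𝒵)) (hprob : ∀ P ∈ 𝔓, IsProbabilityMeasure P)
    (θ : Measure 𝒵 → Θ)
    (o : 𝒵 → 𝒪) (ho : Measurable o)
    (m : 𝕀 → ℝ) (hm : Measurable m)
    (I : Θ × 𝒵 → 𝕀) (hI : Measurable I)
    (α : ℝ) (hα : α ∈ Set.Ioo (0 : ℝ) 1)
    (hinv : ∀ P ∈ 𝔓, ∀ g : G,
      P.map (fun z => g • I (θ P, z)) = P.map (fun z => I (θ P, z)))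
    (hmeas : ∀ P ∈ 𝔓, MeasurableSet {z : 𝒵 | ⌊(Fintype.card G : ℝ) * α⌋₊ ≤
        ({g : G | m (g • I (θ P, z)) ≤ m (I (θ P, z))} : Set G).ncard}) :
    ∀ P ∈ 𝔓, ENNReal.ofReal (1 - α) ≤
      P {z : 𝒵 | ⌊(Fintype.card G : ℝ) * α⌋₊ ≤
        ({g : G | m (g • I (θ P, z)) ≤ m (I (θ P, z))} : Set G).ncard} := by
  classical
  intro P hP
  haveI : IsProbabilityMeasure P := hprob P hP
  set f : 𝒵 → 𝕀 := fun z => I (θ P, z) with hf_def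
  have hf : Measurable f := hI.comp measurable_prodMk_left
  set k : ℕ := ⌊(Fintype.card G : ℝ) * α⌋₊ with hk_def
  set N : 𝕀 → ℕ := fun x => ({g : G | m (g • x) ≤ m x} : Set G).ncard with hN_def
  -- measurability of N
  have hNm : Measurable N := by
    have hNe : N = fun x => (Finset.univ.filter (fun g : G => m (g • x) ≤ m x)).card := by
      funext x
      simp [hN_def, Set.ncard_eq_toFinset_card', Set.toFinset_setOf]
    rw [hNe]
    simp only [Finset.card_filter]
    exact Finset.measurable_sum _ (fun g _ =>
      Measurable.ite (measurableSet_le (hm.comp (hact g)) hm)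
        measurable_const measurable_const)
  set B : Set 𝕀 := {x | N x < k} with hB_def
  have hB : MeasurableSet B := measurableSet_lt hNm measurable_const
  have hgood : MeasurableSet {z : 𝒵 | k ≤ N (f z)} := hmeas P hP
  have hbad_eq : {z : 𝒵 | k ≤ N (f z)}ᶜ = f ⁻¹' B := by
    ext z; simp [hB_def, not_le]
  -- each shifted preimage has the same measure
  have hmap : ∀ h : G, P ((fun z => h • f z) ⁻¹' B) = P (f ⁻¹' B) := by
    intro h
    have hhf : Measurable fun z => h • f z := (hact h).comp hf
    have h1 : P.map (fun z => h • f z) = P.map f := hinv P hP h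
    rw [← Measure.map_apply hhf hB, h1, Measure.map_apply hf hB]
  -- key counting bound
  have key : ((Fintype.card G : ℝ≥0∞)) * P (f ⁻¹' B) ≤ (k : ℝ≥0∞) := by
    have e1 : (Fintype.card G : ℝ≥0∞) * P (f ⁻¹' B)
        = ∑ h : G, P ((fun z => h • f z) ⁻¹' B) := by
      simp [hmap, Finset.sum_const, Finset.card_univ, nsmul_eq_mul]
    have e2 : ∀ h : G, P ((fun z => h • f z) ⁻¹' B)
        = ∫⁻ z, B.indicator (fun _ => (1 : ℝ≥0∞)) (h • f z) ∂P := by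
      intro h
      have hhf : Measurable fun z => h • f z := (hact h).comp hf
      rw [← lintegral_indicator_one (hhf hB)]
      refine lintegral_congr fun z => ?_
      simp [Set.indicator_apply, Set.mem_preimage]
    rw [e1]
    calc ∑ h : G, P ((fun z => h • f z) ⁻¹' B)
        = ∑ h : G, ∫⁻ z, B.indicator (fun _ => (1 : ℝ≥0∞)) (h • f z) ∂P := by
          exact Finset.sum_congr rfl (fun h _ => e2 h)
      _ = ∫⁻ z, ∑ h : G, B.indicator (fun _ => (1 : ℝ≥0∞)) (h • f z) ∂P := by
          rw [lintegral_finset_sum]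
          intro h _
          exact (measurable_one.indicator hB).comp ((hact h).comp hf)
      _ ≤ ∫⁻ _, (k : ℝ≥0∞) ∂P := by
          apply lintegral_mono
          intro z
          dsimp only
          have e3 : ∑ h : G, B.indicator (fun _ => (1 : ℝ≥0∞)) (h • f z)
              = ((Finset.univ.filter (fun h : G => N (h • f z) < k)).card : ℝ≥0∞) := by
            rw [Finset.card_filter]
            push_cast
            exact Finset.sum_congr rfl (fun h _ => by
              simp [Set.indicator_apply, hB_def])
          rw [e3]
          exact Nat.cast_le.mpr (aux_count (G := G) m k (f z))
      _ = (k : ℝ≥0∞) := by simp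
  -- bound the bad probability by α
  have hPbad : P (f ⁻¹' B) ≤ ENNReal.ofReal α := by
    have hK0 : (Fintype.card G : ℝ≥0∞) ≠ 0 := by
      simp [Fintype.card_ne_zero]
    have hKt : (Fintype.card G : ℝ≥0∞) ≠ ⊤ := ENNReal.natCast_ne_top _
    have hk : (k : ℝ≥0∞) ≤ (Fintype.card G : ℝ≥0∞) * ENNReal.ofReal α := by
      have hfl : (k : ℝ) ≤ (Fintype.card G : ℝ) * α :=
        Nat.floor_le (mul_nonneg (Nat.cast_nonneg _) hα.1.le)
      calc (k : ℝ≥0∞) = ENNReal.ofReal (k : ℝ) := by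
            rw [ENNReal.ofReal_natCast]
        _ ≤ ENNReal.ofReal ((Fintype.card G : ℝ) * α) := ENNReal.ofReal_le_ofReal hfl
        _ = (Fintype.card G : ℝ≥0∞) * ENNReal.ofReal α := by
            rw [ENNReal.ofReal_mul (Nat.cast_nonneg _), ENNReal.ofReal_natCast]
    exact (ENNReal.mul_le_mul_iff_right hK0 hKt).mp (key.trans hk)
  -- conclude
  have h1 : P (f ⁻¹' B) = 1 - P {z : 𝒵 | k ≤ N (f z)} := by
    rw [← hbad_eq, measure_compl hgood (measure_ne_top _ _), measure_univ]
  have h2 : P {z : 𝒵 | k ≤ N (f z)} = 1 - P (f ⁻¹' B) := by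
    rw [h1, ENNReal.sub_sub_cancel ENNReal.one_ne_top prob_le_one]
  calc ENNReal.ofReal (1 - α) ≤ 1 - ENNReal.ofReal α := by
        rw [ENNReal.ofReal_sub _ hα.1.le]; simp
    _ ≤ 1 - P (f ⁻¹' B) := tsub_le_tsub_left hPbad 1
    _ = P {z : 𝒵 | k ≤ N (f z)} := h2.symm
end

section
/- (Tie-robust rank lower bound.) Let G = {g₁, …, g_K} be a finite group of cardinality K acting measurably on a measurable space 𝕀, let m : 𝕀 → ℝ be measurable, and let X be a random element of 𝕀 such that for every g ∈ G the law of g • X equals the law of X. Define, for each j ∈ {1,…,K}, the rank R_j := 1 + #{u ∈ {1,…,K} : m(g_j • X) ≥ m(g_u • X)}. Then for every j ∈ {1,…,K} and every k ∈ {1,…,K}, ℙ(R_j ≥ k) ≥ (K − k + 1)/K. -/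
/-!
At every outcome, at most `n` group elements `h` have `#{u | m (u • X) ≤ m (h • X)} < n`: all
of them lie weakly below the largest one, whose count is `< n`. So the events
`{n ≤ #{u | m (u • X) ≤ m (h • X)}}`, `h ∈ G`, cover each outcome at least `|G| - n` times.
Since the count for `h` at `g • x` is the count for `h * g` at `x`, invariance of the law of
`X` makes these `|G|` events equiprobable, hence each has probability at least `(|G| - n) / |G|`.
-/

open MeasureTheory ProbabilityTheory Finset

theorem card_filter_card_le_lt_le {ι α : Type*} [Fintype ι] [LinearOrder α] (v : ι → α)
    (n : ℕ) : #{i | #{u | v u ≤ v i} < n} ≤ n := by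
  set S : Finset ι := {i | #{u | v u ≤ v i} < n}
  obtain hS | hS := S.eq_empty_or_nonempty
  · simp [hS]
  obtain ⟨j, hjS, hjmax⟩ := exists_max_image S v hS
  calc #S ≤ #{u | v u ≤ v j} := card_le_card fun u hu => mem_filter.mpr ⟨mem_univ u, hjmax u hu⟩
    _ ≤ n := (mem_filter.mp hjS).2.le

theorem card_sub_le_card_filter_le_card {ι α : Type*} [Fintype ι] [LinearOrder α] (v : ι → α)
    (n : ℕ) : Fintype.card ι - n ≤ #{i | n ≤ #{u | v u ≤ v i}} := by
  have := card_filter_add_card_filter_not (s := univ) (fun i => n ≤ #{u | v u ≤ v i})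
  simp only [not_le, card_univ] at this
  have := card_filter_card_le_lt_le v n
  omega

theorem mul_measure_univ_le_sum_measure {ι Ω : Type*} [Fintype ι] [MeasurableSpace Ω]
    {μ : Measure Ω} {A : ι → Set Ω} (hA : ∀ i, MeasurableSet (A i)) {c : ENNReal}
    (hc : ∀ ω, c ≤ ∑ i, (A i).indicator 1 ω) : c * μ Set.univ ≤ ∑ i, μ (A i) :=
  calc c * μ Set.univ = ∫⁻ _, c ∂μ := (lintegral_const c).symm
    _ ≤ ∫⁻ ω, ∑ i, (A i).indicator 1 ω ∂μ := lintegral_mono hc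
    _ = ∑ i, μ (A i) := by
      rw [lintegral_finsetSum _ fun i _ => measurable_one.indicator (hA i)]
      simp only [lintegral_indicator_one (hA _)]

def orbitRank {G 𝕀 α : Type*} [Fintype G] [SMul G 𝕀] [LinearOrder α] (m : 𝕀 → α) (h : G)
    (x : 𝕀) : ℕ :=
  #{u : G | m (u • x) ≤ m (h • x)}

theorem orbitRank_smul {G 𝕀 α : Type*} [Group G] [Fintype G] [MulAction G 𝕀] [LinearOrder α]
    (m : 𝕀 → α) (h g : G) (x : 𝕀) : orbitRank m h (g • x) = orbitRank m (h * g) x :=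
  card_equiv (Equiv.mulRight g) fun u => by simp [smul_smul]

theorem measurable_orbitRank {G 𝕀 α : Type*} [Fintype G] [SMul G 𝕀] [MeasurableSpace 𝕀]
    [LinearOrder α] [TopologicalSpace α] [OrderClosedTopology α] [SecondCountableTopology α]
    [MeasurableSpace α] [OpensMeasurableSpace α] {m : 𝕀 → α} (hm : Measurable m)
    (hact : ∀ g : G, Measurable (fun x : 𝕀 => g • x)) (h : G) : Measurable (orbitRank m h) := by
  change Measurable fun x => #{u : G | m (u • x) ≤ m (h • x)}
  simp only [card_filter]
  exact Finset.measurable_sum _ fun u _ => Measurable.ite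
    (measurableSet_le (hm.comp (hact u)) (hm.comp (hact h))) measurable_const measurable_const

theorem measure_preimage_smul_eq {G 𝕀 Ω : Type*} [SMul G 𝕀] [MeasurableSpace 𝕀]
    [MeasurableSpace Ω] {μ : Measure Ω} {X : Ω → 𝕀} (hX : Measurable X) {g : G}
    (hg : Measurable (fun x : 𝕀 => g • x)) (hinv : μ.map (fun ω => g • X ω) = μ.map X)
    {S : Set 𝕀} (hS : MeasurableSet S) : μ ((fun ω => g • X ω) ⁻¹' S) = μ (X ⁻¹' S) := by
  rw [← Measure.map_apply (f := fun ω => g • X ω) (hg.comp hX) hS, hinv,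
    Measure.map_apply hX hS]

section Invariant

variable {G 𝕀 Ω : Type*} [Group G] [Fintype G] [MulAction G 𝕀] [MeasurableSpace 𝕀]
  [MeasurableSpace Ω] {μ : Measure Ω} {X : Ω → 𝕀} {m : 𝕀 → ℝ}

theorem measure_orbitRank_ge_eq (hact : ∀ g : G, Measurable (fun x : 𝕀 => g • x))
    (hm : Measurable m) (hX : Measurable X)
    (hinv : ∀ g : G, μ.map (fun ω => g • X ω) = μ.map X) (n : ℕ) (h h' : G) :
    μ {ω | n ≤ orbitRank m h (X ω)} = μ {ω | n ≤ orbitRank m h' (X ω)} := by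
  have hpre : {ω | n ≤ orbitRank m h (X ω)} =
      (fun ω => (h'⁻¹ * h) • X ω) ⁻¹' {x | n ≤ orbitRank m h' x} := by
    ext ω
    simp [orbitRank_smul]
  rw [hpre, measure_preimage_smul_eq (S := {x | n ≤ orbitRank m h' x}) hX (hact _) (hinv _)
    (measurable_orbitRank hm hact h' measurableSet_Ici)]
  rfl

theorem card_sub_le_card_mul_measure_orbitRank_ge [IsProbabilityMeasure μ]
    (hact : ∀ g : G, Measurable (fun x : 𝕀 => g • x))
    (hm : Measurable m) (hX : Measurable X)
    (hinv : ∀ g : G, μ.map (fun ω => g • X ω) = μ.map X) (n : ℕ) (h : G) :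
    ((Fintype.card G - n : ℕ) : ENNReal) ≤ Fintype.card G * μ {ω | n ≤ orbitRank m h (X ω)} := by
  have hA : ∀ u : G, MeasurableSet {ω | n ≤ orbitRank m u (X ω)} := fun u =>
    (measurable_orbitRank hm hact u).comp hX measurableSet_Ici
  have hcount : ∀ ω, ((Fintype.card G - n : ℕ) : ENNReal) ≤
      ∑ u : G, {ω | n ≤ orbitRank m u (X ω)}.indicator 1 ω := by
    intro ω
    calc ((Fintype.card G - n : ℕ) : ENNReal) ≤ (#{u : G | n ≤ orbitRank m u (X ω)} : ℕ) :=
          Nat.cast_le.mpr (card_sub_le_card_filter_le_card (fun u : G => m (u • X ω)) n)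
      _ = _ := by simp [Set.indicator_apply, sum_boole]
  calc _ = _ * μ Set.univ := by rw [measure_univ, mul_one]
    _ ≤ ∑ u : G, μ {ω | n ≤ orbitRank m u (X ω)} := mul_measure_univ_le_sum_measure hA hcount
    _ = _ := by simp [measure_orbitRank_ge_eq hact hm hX hinv n _ h]

end Invariant

theorem ncard_setOf_le_eq_orbitRank {ι G 𝕀 α : Type*} [Fintype ι] [Fintype G] [SMul G 𝕀]
    [LinearOrder α] (e : ι ≃ G) (m : 𝕀 → α) (j : ι) (x : 𝕀) :
    {u : ι | m (e u • x) ≤ m (e j • x)}.ncard = orbitRank m (e j) x := by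
  classical
  rw [Set.ncard_eq_toFinset_card']
  exact card_equiv e fun u => by simp

theorem tie_robust_rank_lower_bound_general
    {𝕀 G Ω : Type*} [MeasurableSpace 𝕀] [MeasurableSpace Ω]
    [Group G] [Fintype G] [MulAction G 𝕀]
    (hact : ∀ g : G, Measurable (fun x : 𝕀 => g • x))
    (Pr : Measure Ω) [IsProbabilityMeasure Pr]
    (K : ℕ) (e : Fin K ≃ G)
    (m : 𝕀 → ℝ) (hm : Measurable m)
    (X : Ω → 𝕀) (hX : Measurable X)
    (hinv : ∀ g : G, Pr.map (fun ω => g • X ω) = Pr.map X)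
    (R : Fin K → Ω → ℕ)
    (hR : ∀ (j : Fin K) (ω : Ω), R j ω =
      1 + ({u : Fin K | m (e u • X ω) ≤ m (e j • X ω)} : Set (Fin K)).ncard) :
    ∀ (j : Fin K) (k : ℕ), 1 ≤ k → k ≤ K →
      ENNReal.ofReal (((K : ℝ) - k + 1) / K) ≤ Pr {ω : Ω | k ≤ R j ω} := by
  intro j k hk1 hkK
  have hcard : Fintype.card G = K := by simp [← Fintype.card_congr e]
  have hset : {ω | k ≤ R j ω} = {ω | k - 1 ≤ orbitRank m (e j) (X ω)} := by
    ext ω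
    simp only [Set.mem_ofPred_eq, hR, ncard_setOf_le_eq_orbitRank]
    omega
  have hbound := card_sub_le_card_mul_measure_orbitRank_ge hact hm hX hinv (k - 1) (e j)
  rw [hcard] at hbound
  have hnum : ((K : ℝ) - k + 1) = ((K - (k - 1) : ℕ) : ℝ) := by
    rw [Nat.cast_sub (by omega), Nat.cast_sub hk1]
    ring
  rw [hset, hnum, ENNReal.ofReal_div_of_pos (by norm_cast; omega),
    ENNReal.ofReal_natCast, ENNReal.ofReal_natCast]
  exact ENNReal.div_le_of_le_mul' hbound

/-- Tie-robust rank lower bound: if the law of `X` is invariant under a finite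
group `G = {g₁, …, g_K}` acting on `𝕀`, then for every `j` and every
`k ∈ {1, …, K}`, the rank `R_j = 1 + #{u : m(g_j • X) ≥ m(g_u • X)}` satisfies
`ℙ(R_j ≥ k) ≥ (K − k + 1)/K`. -/
theorem tie_robust_rank_lower_bound
    {𝕀 G Ω : Type*} [MeasurableSpace 𝕀] [MeasurableSpace Ω]
    [Group G] [Fintype G] [MulAction G 𝕀]
    (hact : ∀ g : G, Measurable (fun x : 𝕀 => g • x))
    (Pr : Measure Ω) [IsProbabilityMeasure Pr]
    (K : ℕ) (hK : 0 < K) (e : Fin K ≃ G)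
    (m : 𝕀 → ℝ) (hm : Measurable m)
    (X : Ω → 𝕀) (hX : Measurable X)
    (hinv : ∀ g : G, Pr.map (fun ω => g • X ω) = Pr.map X)
    (R : Fin K → Ω → ℕ)
    (hR : ∀ (j : Fin K) (ω : Ω), R j ω =
      1 + ({u : Fin K | m (e u • X ω) ≤ m (e j • X ω)} : Set (Fin K)).ncard) :
    ∀ (j : Fin K) (k : ℕ), 1 ≤ k → k ≤ K →
      ENNReal.ofReal (((K : ℝ) - k + 1) / K) ≤ Pr {ω : Ω | k ≤ R j ω} :=
  tie_robust_rank_lower_bound_general hact Pr K e m hm X hX hinv R hR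
end
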